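/- Let q ≥ 4 and let x ∈ Σ_q^m and y ∈ Σ_q^k be arbitrary sequences. Consider z1 = x·2·1·3·y and z2 = x·1·3·2·y, the concatenations of x, the indicated three symbols, and y (both of length n = m+k+3). Then z1 ≠ z2, Syn(z1) = Syn(z2) (as integers, hence modulo any modulus), and the sequence z' = x·1·3·y of length n-1 can be obtained from z1 by deleting one coordinate and also from z2 by deleting one coordinate. Consequently, for any modulus M and residue a, the set {z ∈ Σ_q^n : Syn(z) ≡ a (mod M)} containing z1 and z2 is not a single-deletion-correcting code. -/

import Mathlib

/-! The syndrome of `x ++ s ++ y` sees the middle block `s` only through its length, its sum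
and its own syndrome. The blocks `2 1 3` and `1 3 2` agree in all three (length `3`, sum `6`,
syndrome `13`), and deleting the leading `2` of one or the trailing `2` of the other leaves
the same word `x 1 3 y`. -/

/-- VT syndrome of a sequence (1-indexed): `Syn(z) = ∑ i * z_i`. -/
def synL (l : List ℕ) : ℕ := ∑ i ∈ Finset.range l.length, (i + 1) * l.getD i 0

theorem sum_range_length_getD (l : List ℕ) :
    ∑ i ∈ Finset.range l.length, l.getD i 0 = l.sum := by
  induction l with
  | nil => simp
  | cons c t ih =>
    rw [List.length_cons, Finset.sum_range_succ']
    simp only [List.getD_cons_succ, List.getD_cons_zero, ih, List.sum_cons]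
    omega

theorem synL_cons (c : ℕ) (l : List ℕ) : synL (c :: l) = c + l.sum + synL l := by
  unfold synL
  rw [List.length_cons, Finset.sum_range_succ', ← sum_range_length_getD l]
  simp only [List.getD_cons_succ, List.getD_cons_zero, add_mul, one_mul, Finset.sum_add_distrib]
  ring

theorem synL_append (a b : List ℕ) :
    synL (a ++ b) = synL a + a.length * b.sum + synL b := by
  induction a with
  | nil => simp [synL]
  | cons c t ih =>
    rw [List.cons_append, synL_cons, ih, synL_cons, List.sum_append, List.length_cons]
    ring

theorem synL_append_append_congr {s t : List ℕ} (hlen : s.length = t.length)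
    (hsum : s.sum = t.sum) (hsyn : synL s = synL t) (x y : List ℕ) :
    synL (x ++ s ++ y) = synL (x ++ t ++ y) := by
  simp only [synL_append, List.length_append, hlen, hsum, hsyn]

theorem eraseIdx_append_cons_length (x s y : List ℕ) (c : ℕ) :
    (x ++ (c :: s) ++ y).eraseIdx x.length = x ++ s ++ y := by
  simp [List.eraseIdx_append_of_length_le]

theorem eraseIdx_append_concat_length (x s y : List ℕ) (c : ℕ) :
    (x ++ (s ++ [c]) ++ y).eraseIdx (x.length + s.length) = x ++ s ++ y := by
  rw [List.append_assoc x, List.append_assoc, ← List.append_assoc x,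
    List.eraseIdx_append_of_length_le (by simp)]
  simp

theorem stmt_16 (q : ℕ) (hq : 4 ≤ q) (x y : List ℕ)
    (hx : ∀ b ∈ x, b < q) (hy : ∀ b ∈ y, b < q) :
    let z1 := x ++ [2, 1, 3] ++ y
    let z2 := x ++ [1, 3, 2] ++ y
    let z' := x ++ [1, 3] ++ y
    z1 ≠ z2 ∧ synL z1 = synL z2 ∧
    (∃ i < z1.length, z' = z1.eraseIdx i) ∧
    (∃ i < z2.length, z' = z2.eraseIdx i) ∧
    ∀ M a : ℕ, synL z1 % M = a →
      ¬ (∀ u v : List ℕ,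
          u.length = z1.length → (∀ b ∈ u, b < q) → synL u % M = a →
          v.length = z1.length → (∀ b ∈ v, b < q) → synL v % M = a →
          u ≠ v →
          ¬ ∃ w : List ℕ,
              (∃ i < u.length, w = u.eraseIdx i) ∧ (∃ i < v.length, w = v.eraseIdx i)) := by
  intro z1 z2 z'
  have hne : z1 ≠ z2 := by simp [z1, z2]
  have hsyn : synL z1 = synL z2 :=
    synL_append_append_congr (s := [2, 1, 3]) (t := [1, 3, 2]) rfl rfl (by decide) x y
  have hdel1 : ∃ i < z1.length, z' = z1.eraseIdx i :=
    ⟨x.length, by simp [z1], (eraseIdx_append_cons_length x [1, 3] y 2).symm⟩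
  have hdel2 : ∃ i < z2.length, z' = z2.eraseIdx i :=
    ⟨x.length + 2, by simp [z2], (eraseIdx_append_concat_length x [1, 3] y 2).symm⟩
  have halph (s : List ℕ) (hs : ∀ b ∈ s, b ≤ 3) : ∀ b ∈ x ++ s ++ y, b < q := by
    simp only [List.mem_append]
    rintro b ((hb | hb) | hb)
    exacts [hx b hb, (hs b hb).trans_lt hq, hy b hb]
  refine ⟨hne, hsyn, hdel1, hdel2, fun M a ha hcode => ?_⟩
  exact hcode z1 z2 rfl (halph _ (by decide)) ha (by simp [z1, z2]) (halph _ (by decide))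
    (hsyn ▸ ha) hne ⟨z', hdel1, hdel2⟩
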